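/- Let S ⊆ ℝ^d and let (S_t)_{t∈ℕ} be a nondecreasing sequence of subsets with union S. Then f(S) ≤ liminf_{t→∞} f(S_t): if infinitely many t satisfy f(S_t) ≤ k for some k ∈ ℕ, then every d-dimensional S-free closed convex set is contained in an S-free polyhedron with at most k facets. -/

import Mathlib

def IsFreeSet {d : ℕ} (S L : Set (Fin d → ℝ)) : Prop :=
  IsClosed L ∧ Convex ℝ L ∧ interior L ∩ S = ∅

def IsMaxFree {d : ℕ} (S L : Set (Fin d → ℝ)) : Prop :=
  IsFreeSet S L ∧ ∀ L', IsFreeSet S L' → L ⊆ L' → L' = L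

def IsPolyhedron {d : ℕ} (P : Set (Fin d → ℝ)) : Prop :=
  ∃ (m : ℕ) (u : Fin m → ((Fin d → ℝ) →ₗ[ℝ] ℝ)) (b : Fin m → ℝ),
    P = {x | ∀ i, u i x ≤ b i}

def FullDim {d : ℕ} (A : Set (Fin d → ℝ)) : Prop := affineSpan ℝ A = ⊤

noncomputable def adim {d : ℕ} (A : Set (Fin d → ℝ)) : ℕ :=
  Module.finrank ℝ (affineSpan ℝ A).direction

def IsFacet {d : ℕ} (P F : Set (Fin d → ℝ)) : Prop :=
  F.Nonempty ∧ IsExposed ℝ P F ∧ adim F + 1 = d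

def FacetsLE {d : ℕ} (P : Set (Fin d → ℝ)) (k : ℕ) : Prop :=
  {F : Set (Fin d → ℝ) | IsFacet P F}.encard ≤ (k : ℕ∞)

open Set Filter

section Aux

variable {d : ℕ}

/-- the system of inequalities -/
def sysSet {d m : ℕ} (u : Fin m → ((Fin d → ℝ) →ₗ[ℝ] ℝ)) (b : Fin m → ℝ) :
    Set (Fin d → ℝ) := {x | ∀ i, u i x ≤ b i}

lemma exists_pos_ray {V : Set (Fin d → ℝ)} (hV : IsOpen V) {x : Fin d → ℝ} (hx : x ∈ V)
    (v : Fin d → ℝ) : ∃ t : ℝ, 0 < t ∧ x + t • v ∈ V := by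
  have hc : Continuous (fun t : ℝ => x + t • v) := by continuity
  have h0 : (fun t : ℝ => x + t • v) 0 ∈ V := by simpa using hx
  have : (fun t : ℝ => x + t • v) ⁻¹' V ∈ nhds (0 : ℝ) :=
    hc.continuousAt.preimage_mem_nhds (hV.mem_nhds h0)
  obtain ⟨ε, hε, hball⟩ := Metric.mem_nhds_iff.1 this
  exact ⟨ε / 2, by positivity, hball (by simp [abs_of_pos, Real.ball_eq_Ioo]; constructor <;> linarith)⟩

lemma sys_closed {m : ℕ} (u : Fin m → ((Fin d → ℝ) →ₗ[ℝ] ℝ)) (b : Fin m → ℝ) :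
    IsClosed (sysSet u b) := by
  have : sysSet u b = ⋂ i, (u i) ⁻¹' (Iic (b i)) := by
    ext x; simp [sysSet]
  rw [this]
  exact isClosed_iInter fun i => (isClosed_Iic).preimage (u i).continuous_of_finiteDimensional

lemma sys_convex {m : ℕ} (u : Fin m → ((Fin d → ℝ) →ₗ[ℝ] ℝ)) (b : Fin m → ℝ) :
    Convex ℝ (sysSet u b) := by
  have : sysSet u b = ⋂ i, {x | u i x ≤ b i} := by ext x; simp [sysSet]
  rw [this]
  exact convex_iInter fun i => convex_halfSpace_le (u i).isLinear _

lemma strict_open {m : ℕ} (u : Fin m → ((Fin d → ℝ) →ₗ[ℝ] ℝ)) (b : Fin m → ℝ)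
    (p : Fin m → Prop) [DecidablePred p] :
    IsOpen {x : Fin d → ℝ | ∀ i, p i → u i x < b i} := by
  have : {x : Fin d → ℝ | ∀ i, p i → u i x < b i} = ⋂ i, {x | p i → u i x < b i} := by
    ext x; simp
  rw [this]
  refine isOpen_iInter_of_finite fun i => ?_
  by_cases h : p i
  · have : {x : Fin d → ℝ | p i → u i x < b i} = (u i) ⁻¹' (Iio (b i)) := by
      ext x; simp [h]
    rw [this]
    exact (isOpen_Iio).preimage (u i).continuous_of_finiteDimensional
  · have : {x : Fin d → ℝ | p i → u i x < b i} = univ := by ext x; simp [h]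
    rw [this]; exact isOpen_univ

lemma strict_subset_interior {m : ℕ} {u : Fin m → ((Fin d → ℝ) →ₗ[ℝ] ℝ)} {b : Fin m → ℝ}
    (hb : ∀ i, u i = 0 → 0 ≤ b i) :
    {x : Fin d → ℝ | ∀ i, u i ≠ 0 → u i x < b i} ⊆ interior (sysSet u b) := by
  classical
  refine interior_maximal ?_ (strict_open u b _)
  intro x hx i
  by_cases h : u i = 0
  · simp [h, hb i h]
  · exact (hx i h).le

lemma interior_subset_strict {m : ℕ} {u : Fin m → ((Fin d → ℝ) →ₗ[ℝ] ℝ)} {b : Fin m → ℝ}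
    {x : Fin d → ℝ} (hx : x ∈ interior (sysSet u b)) :
    ∀ i, u i ≠ 0 → u i x < b i := by
  intro i hui
  rcases lt_or_eq_of_le (interior_subset hx i) with h | h
  · exact h
  · exfalso
    obtain ⟨v, hv⟩ := DFunLike.ne_iff.1 hui
    obtain ⟨t, ht, hmem⟩ := exists_pos_ray isOpen_interior hx ((u i v)⁻¹ • v)
    have := interior_subset hmem i
    rw [map_add, map_smul, map_smul, smul_eq_mul, smul_eq_mul, inv_mul_cancel₀ hv] at this
    simp only [mul_one] at this
    rw [h] at this
    linarith

end Aux
section Aux2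

variable {d : ℕ}

noncomputable def dotL {d : ℕ} (w : Fin d → ℝ) : (Fin d → ℝ) →ₗ[ℝ] ℝ :=
  ∑ j, w j • LinearMap.proj j

lemma dotL_apply (w x : Fin d → ℝ) : dotL w x = ∑ j, w j * x j := by
  simp [dotL]

lemma exists_dotL_eq (u : (Fin d → ℝ) →ₗ[ℝ] ℝ) : ∃ w, u = dotL w := by
  classical
  refine ⟨fun j => u (Pi.single j 1), LinearMap.ext fun x => ?_⟩
  rw [dotL_apply, LinearMap.pi_apply_eq_sum_univ u x]
  refine Finset.sum_congr rfl fun j _ => ?_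
  rw [smul_eq_mul, mul_comm]
  congr 1
  congr 1
  ext i
  simp [Pi.single_apply, eq_comm]

lemma dotL_eq_zero_iff (w : Fin d → ℝ) : dotL w = 0 ↔ w = 0 := by
  constructor
  · intro h
    ext j
    have := DFunLike.congr_fun h (Pi.single j 1)
    classical
    rw [dotL_apply] at this
    simpa [Pi.single_apply, Finset.sum_ite_eq'] using this
  · rintro rfl; ext x; simp [dotL_apply]

lemma dotL_smul (r : ℝ) (w : Fin d → ℝ) : dotL (r • w) = r • dotL w := by
  ext x; simp [dotL_apply, Finset.mul_sum, mul_assoc]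

lemma continuous_dotL_left (x : Fin d → ℝ) : Continuous (fun w : Fin d → ℝ => dotL w x) := by
  simp only [dotL_apply]
  exact continuous_finset_sum _ fun j _ => (continuous_apply j).mul continuous_const

/-- proportionality from equality of hyperplanes -/
lemma hyperplane_proportional {u u' : (Fin d → ℝ) →ₗ[ℝ] ℝ} {b b' : ℝ}
    (hu : u ≠ 0) (hu' : u' ≠ 0)
    (h : {x : Fin d → ℝ | u x = b} = {x : Fin d → ℝ | u' x = b'}) :
    ∃ lam : ℝ, lam ≠ 0 ∧ u' = lam • u ∧ b' = lam * b := by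
  obtain ⟨v, hv⟩ := DFunLike.ne_iff.1 hu
  set v' : Fin d → ℝ := (u v)⁻¹ • v with hv'def
  have hv1 : u v' = 1 := by
    rw [hv'def, map_smul, smul_eq_mul, inv_mul_cancel₀ hv]
  set lam := u' v' with hlam
  have key : ∀ x : Fin d → ℝ, u' x - (u x - b) * lam = b' := by
    intro x
    have hx : u (x - (u x - b) • v') = b := by
      rw [map_sub, map_smul, smul_eq_mul, hv1, mul_one]; ring
    have h2 : x - (u x - b) • v' ∈ {x : Fin d → ℝ | u x = b} := hx
    rw [h] at h2
    have h3 : u' (x - (u x - b) • v') = b' := h2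
    rw [map_sub, map_smul, smul_eq_mul] at h3
    linarith [h3]
  have hb' : b' = lam * b := by
    have := key 0
    simp only [map_zero] at this
    linarith [this]
  have huu : u' = lam • u := by
    refine LinearMap.ext fun x => ?_
    have hx := key x
    rw [hb'] at hx
    simp only [LinearMap.smul_apply, smul_eq_mul]
    linear_combination hx
  refine ⟨lam, ?_, huu, hb'⟩
  intro h0
  rw [h0] at huu
  simp at huu
  exact hu' huu

/-- equality of affine subspaces from inclusion plus direction inclusion -/
lemma affs_eq {V : Type*} [NormedAddCommGroup V] [NormedSpace ℝ V]
    {A B : AffineSubspace ℝ V} (hle : A ≤ B) (hdir : B.direction ≤ A.direction)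
    (hne : (A : Set V).Nonempty) : A = B := by
  obtain ⟨p, hp⟩ := hne
  refine le_antisymm hle ?_
  intro x hx
  have : x -ᵥ p ∈ B.direction := AffineSubspace.vsub_mem_direction hx (hle hp)
  have := AffineSubspace.vadd_mem_of_mem_direction (hdir this) hp
  simpa using this

end Aux2
section Aux3

variable {d : ℕ}

lemma range_eq_top_of_ne_zero {u : (Fin d → ℝ) →ₗ[ℝ] ℝ} (hu : u ≠ 0) :
    LinearMap.range u = ⊤ := by
  obtain ⟨v, hv⟩ := DFunLike.ne_iff.1 hu
  rw [Submodule.eq_top_iff']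
  intro c
  exact ⟨(c / u v) • v, by rw [map_smul, smul_eq_mul, div_mul_cancel₀ _ hv]⟩

lemma finrank_ker_add_one {u : (Fin d → ℝ) →ₗ[ℝ] ℝ} (hu : u ≠ 0) :
    Module.finrank ℝ (LinearMap.ker u) + 1 = d := by
  have h := LinearMap.finrank_range_add_finrank_ker u
  rw [range_eq_top_of_ne_zero hu, finrank_top] at h
  have h1 : Module.finrank ℝ ℝ = 1 := Module.finrank_self ℝ
  rw [h1] at h
  have hd : Module.finrank ℝ (Fin d → ℝ) = d := by simp
  omega

/-- membership in the hyperplane affine subspace -/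
lemma mem_hyp_mk' {u : (Fin d → ℝ) →ₗ[ℝ] ℝ} {z x : Fin d → ℝ} :
    x ∈ AffineSubspace.mk' z (LinearMap.ker u) ↔ u x = u z := by
  rw [AffineSubspace.mem_mk', LinearMap.mem_ker]
  have : x -ᵥ z = x - z := rfl
  rw [this, map_sub, sub_eq_zero]

/-- a convex subset of a system admits a point strict in every non-tight constraint -/
lemma exists_center {m : ℕ} (u : Fin m → ((Fin d → ℝ) →ₗ[ℝ] ℝ)) (b : Fin m → ℝ)
    {F : Set (Fin d → ℝ)} (hF : Convex ℝ F) (hne : F.Nonempty) (hFP : F ⊆ sysSet u b) :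
    ∃ z ∈ F, ∀ j, (∃ p ∈ F, u j p < b j) → u j z < b j := by
  classical
  set T : Finset (Fin m) := Finset.univ.filter (fun j => ∃ p ∈ F, u j p < b j) with hT
  rcases T.eq_empty_or_nonempty with hTe | hTne
  · refine ⟨hne.choose, hne.choose_spec, fun j hj => ?_⟩
    exfalso
    have : j ∈ T := by simp [hT, hj]
    simp [hTe] at this
  · set p : Fin m → (Fin d → ℝ) := fun j =>
      if h : ∃ q ∈ F, u j q < b j then h.choose else hne.choose with hp
    have hpF : ∀ j, p j ∈ F := by
      intro j
      by_cases h : ∃ q ∈ F, u j q < b j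
      · simp only [hp, dif_pos h]; exact h.choose_spec.1
      · simp only [hp, dif_neg h]; exact hne.choose_spec
    have hps : ∀ j ∈ T, u j (p j) < b j := by
      intro j hj
      have h : ∃ q ∈ F, u j q < b j := by simpa [hT] using hj
      simp only [hp, dif_pos h]
      exact h.choose_spec.2
    set z : Fin d → ℝ := ∑ j ∈ T, ((T.card : ℝ)⁻¹) • p j with hz
    have hcard : (0 : ℝ) < T.card := by
      exact_mod_cast Finset.card_pos.2 hTne
    have hzF : z ∈ F := by
      refine hF.sum_mem (fun i _ => by positivity) ?_ (fun i _ => hpF i)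
      rw [Finset.sum_const, nsmul_eq_mul, mul_inv_cancel₀ (ne_of_gt hcard)]
    refine ⟨z, hzF, fun j hj => ?_⟩
    have hjT : j ∈ T := by simp [hT, hj]
    have hmap : u j z = ∑ i ∈ T, ((T.card : ℝ)⁻¹) * u j (p i) := by
      rw [hz, map_sum]
      refine Finset.sum_congr rfl fun i _ => ?_
      rw [map_smul, smul_eq_mul]
    rw [hmap]
    have hlt : ∑ i ∈ T, ((T.card : ℝ)⁻¹) * u j (p i) < ∑ i ∈ T, ((T.card : ℝ)⁻¹) * b j := by
      refine Finset.sum_lt_sum (fun i _ => ?_) ⟨j, hjT, ?_⟩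
      · have := hFP (hpF i) j
        have hnn : (0:ℝ) ≤ (T.card : ℝ)⁻¹ := by positivity
        exact mul_le_mul_of_nonneg_left this hnn
      · exact (mul_lt_mul_iff_right₀ (by positivity)).2 (hps j hjT)
    calc ∑ i ∈ T, ((T.card : ℝ)⁻¹) * u j (p i) < ∑ i ∈ T, ((T.card : ℝ)⁻¹) * b j := hlt
      _ = b j := by
        rw [Finset.sum_const, nsmul_eq_mul, ← mul_assoc, mul_inv_cancel₀ (ne_of_gt hcard), one_mul]

/-- crossing point construction -/
lemma crossing {m : ℕ} (u : Fin m → ((Fin d → ℝ) →ₗ[ℝ] ℝ)) (b : Fin m → ℝ) (i : Fin m)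
    {x₀ y : Fin d → ℝ} (hx₀ : ∀ j, u j x₀ < b j) (hy : ∀ j, j ≠ i → u j y ≤ b j)
    (hyi : b i < u i y) :
    ∃ z, u i z = b i ∧ ∀ j, j ≠ i → u j z < b j := by
  set t : ℝ := (b i - u i x₀) / (u i y - u i x₀) with ht
  have hden : 0 < u i y - u i x₀ := by linarith [hx₀ i]
  have ht0 : 0 < t := by
    apply div_pos _ hden; linarith [hx₀ i]
  have ht1 : t < 1 := by
    rw [ht, div_lt_one hden]; linarith
  refine ⟨x₀ + t • (y - x₀), ?_, ?_⟩
  · rw [map_add, map_smul, map_sub, smul_eq_mul, ht]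
    field_simp
    ring
  · intro j hj
    rw [map_add, map_smul, map_sub, smul_eq_mul]
    have h1 := hx₀ j
    have h2 := hy j hj
    nlinarith [h1, h2, ht0, ht1]

end Aux3
section Aux4

variable {d : ℕ}

lemma isFacet_of_active {m : ℕ} (u : Fin m → ((Fin d → ℝ) →ₗ[ℝ] ℝ)) (b : Fin m → ℝ)
    (i : Fin m) {z : Fin d → ℝ} (hzi : u i z = b i) (hz : ∀ j, j ≠ i → u j z < b j)
    (hui : u i ≠ 0) :
    IsFacet (sysSet u b) (sysSet u b ∩ {x | u i x = b i}) ∧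
      affineSpan ℝ (sysSet u b ∩ {x | u i x = b i}) =
        AffineSubspace.mk' z (LinearMap.ker (u i)) := by
  classical
  set P := sysSet u b with hP
  set F := P ∩ {x | u i x = b i} with hF
  have hzP : z ∈ P := by
    intro j
    by_cases hj : j = i
    · subst hj; exact hzi.le
    · exact (hz j hj).le
  have hzF : z ∈ F := ⟨hzP, hzi⟩
  -- affine span computation
  have hspan : affineSpan ℝ F = AffineSubspace.mk' z (LinearMap.ker (u i)) := by
    refine affs_eq ?_ ?_ ⟨z, subset_affineSpan ℝ F hzF⟩
    · rw [affineSpan_le]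
      intro x hx
      have : u i x = u i z := by rw [hzi]; exact hx.2
      exact mem_hyp_mk'.2 this
    · rw [AffineSubspace.direction_mk']
      intro v hv
      have hvk : u i v = 0 := hv
      -- find small ε with z + ε • v ∈ F
      have hO : IsOpen {x : Fin d → ℝ | ∀ j, j ≠ i → u j x < b j} := strict_open u b _
      obtain ⟨t, ht, hmem⟩ := exists_pos_ray hO (by exact hz) v
      have hztv : z + t • v ∈ F := by
        constructor
        · intro j
          by_cases hj : j = i
          · subst hj
            rw [map_add, map_smul, smul_eq_mul, hvk, mul_zero, add_zero, hzi]
          · exact (hmem j hj).le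
        · show u i (z + t • v) = b i
          rw [map_add, map_smul, smul_eq_mul, hvk, mul_zero, add_zero, hzi]
      have hdir : (z + t • v) -ᵥ z ∈ (affineSpan ℝ F).direction :=
        AffineSubspace.vsub_mem_direction (subset_affineSpan ℝ F hztv) (subset_affineSpan ℝ F hzF)
      have htv : (z + t • v) -ᵥ z = t • v := by
        show (z + t • v) - z = t • v; ring_nf
      rw [htv] at hdir
      have := Submodule.smul_mem (affineSpan ℝ F).direction t⁻¹ hdir
      rwa [inv_smul_smul₀ (ne_of_gt ht)] at this
  refine ⟨⟨⟨z, hzF⟩, ?_, ?_⟩, hspan⟩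
  · -- exposed
    intro _
    refine ⟨((u i).toContinuousLinearMap : (Fin d → ℝ) →L[ℝ] ℝ), ?_⟩
    ext x
    simp only [hF, mem_inter_iff, mem_setOf_eq, LinearMap.coe_toContinuousLinearMap']
    constructor
    · rintro ⟨hxP, hxi⟩
      exact ⟨hxP, fun y hy => by rw [hxi]; exact hy i⟩
    · rintro ⟨hxP, hmax⟩
      refine ⟨hxP, le_antisymm (hxP i) ?_⟩
      rw [← hzi]
      exact hmax z hzP
  · -- dimension
    show adim F + 1 = d
    rw [adim, hspan, AffineSubspace.direction_mk']
    exact finrank_ker_add_one hui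

end Aux4
section Aux5

variable {d : ℕ}

lemma fullDim_nonempty {P : Set (Fin d → ℝ)} (h : FullDim P) : P.Nonempty := by
  rw [← affineSpan_nonempty ℝ, h]
  exact ⟨0, AffineSubspace.mem_top ℝ _ 0⟩

lemma adim_of_fullDim {P : Set (Fin d → ℝ)} (h : FullDim P) : adim P = d := by
  rw [adim, h, AffineSubspace.direction_top, finrank_top]
  simp

/-- Step A: every facet has a nonzero tight constraint -/
lemma facet_tight {m : ℕ} {u : Fin m → ((Fin d → ℝ) →ₗ[ℝ] ℝ)} {b : Fin m → ℝ}
    (hfull : FullDim (sysSet u b)) {F : Set (Fin d → ℝ)} (hF : IsFacet (sysSet u b) F) :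
    ∃ i, u i ≠ 0 ∧ F ⊆ {x | u i x = b i} := by
  classical
  set P := sysSet u b with hP
  obtain ⟨hFne, hFexp, hFdim⟩ := hF
  obtain ⟨l, hl⟩ := hFexp hFne
  have hFsubP : F ⊆ P := by rw [hl]; exact fun x hx => hx.1
  have hFconv : Convex ℝ F := hFexp.convex (sys_convex u b)
  have hPne : P.Nonempty := fullDim_nonempty hfull
  have hb0 : ∀ j, u j = 0 → 0 ≤ b j := by
    intro j hj
    obtain ⟨q, hq⟩ := hPne
    have := hq j
    rw [hj] at this
    simpa using this
  by_contra hno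
  push_neg at hno
  obtain ⟨z, hzF, hzs⟩ := exists_center u b hFconv hFne hFsubP
  have hzstrict : ∀ i, u i ≠ 0 → u i z < b i := by
    intro i hi
    obtain ⟨q, hqF, hq⟩ := not_subset.1 (hno i hi)
    have hqlt : u i q < b i := lt_of_le_of_ne (hFsubP hqF i) hq
    exact hzs i ⟨q, hqF, hqlt⟩
  have hzint : z ∈ interior P := strict_subset_interior hb0 hzstrict
  -- l vanishes
  have hl0 : ∀ v : Fin d → ℝ, l v = 0 := by
    have key : ∀ v : Fin d → ℝ, l v ≤ 0 := by
      intro v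
      obtain ⟨t, ht, hmem⟩ := exists_pos_ray isOpen_interior hzint v
      have hzPmax : ∀ y ∈ P, l y ≤ l z := by
        have : z ∈ {x ∈ P | ∀ y ∈ P, l y ≤ l x} := hl ▸ hzF
        exact this.2
      have := hzPmax _ (interior_subset hmem)
      rw [map_add, map_smul, smul_eq_mul] at this
      nlinarith
    intro v
    have h1 := key v
    have h2 := key (-v)
    rw [map_neg] at h2
    linarith
  have hFP : F = P := by
    rw [hl]
    ext x
    simp only [mem_setOf_eq, hl0, le_refl, implies_true, and_true]
  rw [hFP] at hFdim
  rw [adim_of_fullDim hfull] at hFdim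
  omega

/-- Step B: a facet contained in an active nonzero hyperplane equals the full face -/
lemma facet_eq_slice {m : ℕ} {u : Fin m → ((Fin d → ℝ) →ₗ[ℝ] ℝ)} {b : Fin m → ℝ}
    {F : Set (Fin d → ℝ)} (hF : IsFacet (sysSet u b) F) {i : Fin m} (hui : u i ≠ 0)
    (hFi : F ⊆ {x | u i x = b i}) :
    F = sysSet u b ∩ {x | u i x = b i} := by
  classical
  set P := sysSet u b with hP
  obtain ⟨hFne, hFexp, hFdim⟩ := hF
  obtain ⟨l, hl⟩ := hFexp hFne
  have hFsubP : F ⊆ P := by rw [hl]; exact fun x hx => hx.1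
  have hFconv : Convex ℝ F := hFexp.convex (sys_convex u b)
  have hPne : P.Nonempty := hFne.mono hFsubP
  have hb0 : ∀ j, u j = 0 → 0 ≤ b j := by
    intro j hj
    obtain ⟨q, hq⟩ := hPne
    have := hq j
    rw [hj] at this
    simpa using this
  obtain ⟨z, hzF, hzs⟩ := exists_center u b hFconv hFne hFsubP
  -- key affine span identification
  have hAeq : ∀ j, u j ≠ 0 → F ⊆ {x | u j x = b j} →
      affineSpan ℝ F = AffineSubspace.mk' z (LinearMap.ker (u j)) := by
    intro j hju hFj
    refine affs_eq ?_ ?_ ⟨z, subset_affineSpan ℝ F hzF⟩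
    · rw [affineSpan_le]
      intro x hx
      exact mem_hyp_mk'.2 (by rw [hFj hx, hFj hzF])
    · rw [AffineSubspace.direction_mk']
      have hle : (affineSpan ℝ F).direction ≤ LinearMap.ker (u j) := by
        have h1 : affineSpan ℝ F ≤ AffineSubspace.mk' z (LinearMap.ker (u j)) := by
          rw [affineSpan_le]
          intro x hx
          exact mem_hyp_mk'.2 (by rw [hFj hx, hFj hzF])
        have := AffineSubspace.direction_le h1
        rwa [AffineSubspace.direction_mk'] at this
      have heq : Module.finrank ℝ (affineSpan ℝ F).direction
          = Module.finrank ℝ (LinearMap.ker (u j)) := by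
        have h2 := finrank_ker_add_one hju
        have h3 : adim F + 1 = d := hFdim
        rw [adim] at h3
        omega
      rw [Submodule.eq_of_le_of_finrank_eq hle heq]
  apply subset_antisymm
  · exact fun x hx => ⟨hFsubP hx, hFi hx⟩
  · rintro x ⟨hxP, hxi⟩
    have hO : IsOpen {y : Fin d → ℝ | ∀ j, (∃ p ∈ F, u j p < b j) → u j y < b j} :=
      strict_open u b _
    have hzO : z ∈ {y : Fin d → ℝ | ∀ j, (∃ p ∈ F, u j p < b j) → u j y < b j} :=
      fun j hj => hzs j hj
    obtain ⟨t, ht, hmem⟩ := exists_pos_ray hO hzO (z - x)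
    have hin : z + t • (z - x) ∈ P := by
      intro j
      by_cases hj : ∃ p ∈ F, u j p < b j
      · exact (hmem j hj).le
      · push_neg at hj
        have hFj : F ⊆ {y : Fin d → ℝ | u j y = b j} :=
          fun p hp => le_antisymm (hFsubP hp j) (hj p hp)
        by_cases hju : u j = 0
        · rw [hju]; simpa using hb0 j hju
        · have e1 := hAeq j hju hFj
          have e2 := hAeq i hui hFi
          have hx_i : x ∈ AffineSubspace.mk' z (LinearMap.ker (u i)) :=
            mem_hyp_mk'.2 (by rw [hxi, hFi hzF])
          rw [← e2, e1] at hx_i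
          have hxj : u j x = u j z := mem_hyp_mk'.1 hx_i
          have hzj : u j z = b j := hFj hzF
          have : u j (z + t • (z - x)) = b j := by
            rw [map_add, map_smul, map_sub, smul_eq_mul, hxj, hzj]; ring
          exact this.le
    have hzmax : ∀ y ∈ P, l y ≤ l z := ((hl ▸ hzF) : z ∈ {x ∈ P | ∀ y ∈ P, l y ≤ l x}).2
    have h1 := hzmax _ hin
    rw [map_add, map_smul, map_sub, smul_eq_mul] at h1
    have hlzx : l z ≤ l x := by nlinarith
    rw [hl]
    exact ⟨hxP, fun y hy => le_trans (hzmax y hy) hlzx⟩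

/-- a system with m constraints has at most m facets -/
lemma facets_le_sys {m : ℕ} (u : Fin m → ((Fin d → ℝ) →ₗ[ℝ] ℝ)) (b : Fin m → ℝ)
    (hfull : FullDim (sysSet u b)) : FacetsLE (sysSet u b) m := by
  classical
  rw [FacetsLE]
  set g : Fin m → Set (Fin d → ℝ) := fun i => sysSet u b ∩ {x | u i x = b i} with hg
  have hsub : {F : Set (Fin d → ℝ) | IsFacet (sysSet u b) F} ⊆ Set.range g := by
    intro F hF
    obtain ⟨i, hi, hFi⟩ := facet_tight hfull hF
    exact ⟨i, (facet_eq_slice hF hi hFi).symm⟩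
  calc {F : Set (Fin d → ℝ) | IsFacet (sysSet u b) F}.encard
      ≤ (Set.range g).encard := Set.encard_le_encard hsub
    _ = (g '' univ).encard := by rw [image_univ]
    _ ≤ (univ : Set (Fin m)).encard := Set.encard_image_le _ _
    _ = (m : ℕ∞) := by
        rw [encard_univ]
        simp [ENat.card_eq_coe_fintype_card]

end Aux5
section Aux6

variable {d : ℕ}

lemma reduce_rep {P : Set (Fin d → ℝ)} (hfull : FullDim P) {k : ℕ} (hfac : FacetsLE P k) :
    ∀ (m : ℕ) (u : Fin m → ((Fin d → ℝ) →ₗ[ℝ] ℝ)) (b : Fin m → ℝ), P = sysSet u b →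
      ∃ (u' : Fin k → ((Fin d → ℝ) →ₗ[ℝ] ℝ)) (b' : Fin k → ℝ), P = sysSet u' b' := by
  classical
  intro m
  induction m using Nat.strong_induction_on with
  | _ m ih =>
  intro u b hPdef
  by_cases hmk : m ≤ k
  · refine ⟨fun i => if h : (i : ℕ) < m then u ⟨i, h⟩ else 0,
      fun i => if h : (i : ℕ) < m then b ⟨i, h⟩ else 1, ?_⟩
    rw [hPdef]; ext x; simp only [sysSet, mem_setOf_eq]
    constructor
    · intro h i
      by_cases hip : (i : ℕ) < m
      · simp only [dif_pos hip]; exact h _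
      · simp only [dif_neg hip]; norm_num
    · intro h j
      have hcast : ((Fin.castLE hmk j : Fin k) : ℕ) < m := by
        simpa using j.2
      have h2 := h (Fin.castLE hmk j)
      rw [dif_pos hcast, dif_pos hcast] at h2
      have hj : (⟨((Fin.castLE hmk j : Fin k) : ℕ), hcast⟩ : Fin m) = j := by
        ext; simp
      rwa [hj] at h2
  · push_neg at hmk
    obtain ⟨m', rfl⟩ : ∃ m', m = m' + 1 := ⟨m - 1, by omega⟩
    have hPne := fullDim_nonempty hfull
    have hb0 : ∀ j, u j = 0 → 0 ≤ b j := by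
      intro j hj
      obtain ⟨q, hq⟩ := hPne
      rw [hPdef] at hq
      have := hq j
      rw [hj] at this
      simpa using this
    have hredex : ∃ i : Fin (m' + 1), P = {x | ∀ j, j ≠ i → u j x ≤ b j} := by
      by_contra hno
      push_neg at hno
      have hu : ∀ j, u j ≠ 0 := by
        intro j hj
        apply hno j
        rw [hPdef]; ext x; simp only [sysSet, mem_setOf_eq]
        constructor
        · intro h j' _; exact h j'
        · intro h j'
          by_cases hj' : j' = j
          · subst hj'; rw [hj]; simpa using hb0 _ hj
          · exact h j' hj'
      have hPconv : Convex ℝ P := hPdef ▸ sys_convex u b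
      have hint : (interior P).Nonempty :=
        (hPconv.interior_nonempty_iff_affineSpan_eq_top).2 hfull
      obtain ⟨x₀, hx₀i⟩ := hint
      have hx₀ : ∀ j, u j x₀ < b j := by
        rw [hPdef] at hx₀i
        exact fun j => interior_subset_strict hx₀i j (hu j)
      have hy : ∀ i : Fin (m'+1), ∃ y, (∀ j, j ≠ i → u j y ≤ b j) ∧ b i < u i y := by
        intro i
        have hss : P ⊆ {x | ∀ j, j ≠ i → u j x ≤ b j} := by
          rw [hPdef]; exact fun x hx j _ => hx j
        obtain ⟨y, hy1, hy2⟩ := exists_of_ssubset (ssubset_of_subset_of_ne hss (hno i))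
        refine ⟨y, hy1, ?_⟩
        rw [hPdef] at hy2
        simp only [sysSet, mem_setOf_eq, not_forall] at hy2
        obtain ⟨j, hj⟩ := hy2
        by_cases hji : j = i
        · subst hji; exact lt_of_not_ge hj
        · exact absurd (hy1 j hji) hj
      choose y hy1 hy2 using hy
      have hzex : ∀ i : Fin (m'+1), ∃ z, u i z = b i ∧ ∀ j, j ≠ i → u j z < b j :=
        fun i => crossing u b i hx₀ (hy1 i) (hy2 i)
      choose z hz1 hz2 using hzex
      have hFf : ∀ i, IsFacet P (P ∩ {x | u i x = b i}) ∧
          affineSpan ℝ (P ∩ {x | u i x = b i}) =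
            AffineSubspace.mk' (z i) (LinearMap.ker (u i)) := by
        intro i
        rw [hPdef]
        exact isFacet_of_active u b i (hz1 i) (hz2 i) (hu i)
      have hinj : Function.Injective (fun i => P ∩ {x | u i x = b i}) := by
        intro i j hij
        by_contra hne'
        simp only at hij
        have e1 := (hFf i).2
        have e2 := (hFf j).2
        rw [hij, e2] at e1
        have hsets : {x : Fin d → ℝ | u i x = b i} = {x : Fin d → ℝ | u j x = b j} := by
          ext x
          simp only [mem_setOf_eq]
          constructor
          · intro hx
            have : x ∈ AffineSubspace.mk' (z i) (LinearMap.ker (u i)) :=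
              mem_hyp_mk'.2 (by rw [hx, hz1 i])
            rw [← e1] at this
            have := mem_hyp_mk'.1 this
            rw [this, hz1 j]
          · intro hx
            have : x ∈ AffineSubspace.mk' (z j) (LinearMap.ker (u j)) :=
              mem_hyp_mk'.2 (by rw [hx, hz1 j])
            rw [e1] at this
            have := mem_hyp_mk'.1 this
            rw [this, hz1 i]
        obtain ⟨lam, hlam0, hlamu, hlamb⟩ := hyperplane_proportional (hu i) (hu j) hsets
        rcases lt_trichotomy lam 0 with hneg | h0 | hpos
        · have hPsub : P ⊆ {x : Fin d → ℝ | u i x = b i} := by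
            intro x hx
            rw [hPdef] at hx
            have h1 : u i x ≤ b i := hx i
            have h2 : u j x ≤ b j := hx j
            rw [hlamu, hlamb] at h2
            simp only [LinearMap.smul_apply, smul_eq_mul] at h2
            have h3 : b i ≤ u i x := by nlinarith [h2, hneg]
            exact le_antisymm h1 h3
          have hall : ∀ x : Fin d → ℝ, u i x = b i := by
            intro x
            have hsp : affineSpan ℝ P ≤ AffineSubspace.mk' (z i) (LinearMap.ker (u i)) := by
              rw [affineSpan_le]
              exact fun p hp => mem_hyp_mk'.2 (by rw [hPsub hp, hz1 i])
            rw [hfull] at hsp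
            have hx : x ∈ AffineSubspace.mk' (z i) (LinearMap.ker (u i)) :=
              hsp (AffineSubspace.mem_top ℝ _ x)
            rw [mem_hyp_mk'.1 hx, hz1 i]
          have hb0' : b i = 0 := by
            have := hall 0
            rw [map_zero] at this
            linarith
          have hizero : u i = 0 := by
            refine LinearMap.ext fun v => ?_
            rw [hall v, hb0', LinearMap.zero_apply]
          exact hu i hizero
        · exact hlam0 h0
        · apply hno j
          rw [hPdef]; ext x; simp only [sysSet, mem_setOf_eq]
          constructor
          · exact fun h j' _ => h j'
          · intro h j'
            by_cases hj' : j' = j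
            · subst hj'
              have hi' : u i x ≤ b i := h i hne'
              rw [hlamu, hlamb]
              simp only [LinearMap.smul_apply, smul_eq_mul]
              exact mul_le_mul_of_nonneg_left hi' hpos.le
            · exact h j' hj'
      have hcount : ((m' + 1 : ℕ) : ℕ∞) ≤ (k : ℕ∞) := by
        have hsub2 : Set.range (fun i : Fin (m'+1) => P ∩ {x | u i x = b i}) ⊆
            {F : Set (Fin d → ℝ) | IsFacet P F} := by
          rintro F ⟨i, rfl⟩
          exact (hFf i).1
        calc ((m' + 1 : ℕ) : ℕ∞)
            = (univ : Set (Fin (m'+1))).encard := by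
              rw [encard_univ]; simp [ENat.card_eq_coe_fintype_card]
          _ = ((fun i : Fin (m'+1) => P ∩ {x | u i x = b i}) '' univ).encard :=
              (hinj.injOn.encard_image).symm
          _ = (Set.range (fun i : Fin (m'+1) => P ∩ {x | u i x = b i})).encard := by
              rw [image_univ]
          _ ≤ {F : Set (Fin d → ℝ) | IsFacet P F}.encard := encard_le_encard hsub2
          _ ≤ (k : ℕ∞) := hfac
      have : m' + 1 ≤ k := by exact_mod_cast hcount
      omega
    obtain ⟨i, hi⟩ := hredex
    refine ih m' (by omega) (fun j => u (i.succAbove j)) (fun j => b (i.succAbove j)) ?_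
    rw [hi]; ext x; simp only [sysSet, mem_setOf_eq]
    constructor
    · intro h j
      exact h _ (Fin.succAbove_ne i j)
    · intro h j hj
      obtain ⟨l, rfl⟩ := Fin.exists_succAbove_eq hj
      exact h l

end Aux6
section Aux7

variable {d : ℕ}

lemma norm_rep {k : ℕ} {P : Set (Fin d → ℝ)} (u : Fin k → ((Fin d → ℝ) →ₗ[ℝ] ℝ))
    (b : Fin k → ℝ) (hP : P = sysSet u b) :
    ∃ p : Fin k → (Fin d → ℝ) × ℝ, (∀ i, ‖(p i).1‖ + |(p i).2| = 1) ∧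
      P = {x | ∀ i, dotL (p i).1 x ≤ (p i).2} := by
  classical
  choose w₀ hw₀ using fun i => exists_dotL_eq (u i)
  set r : Fin k → ℝ := fun i => (‖w₀ i‖ + |b i|)⁻¹ with hr
  set p : Fin k → (Fin d → ℝ) × ℝ := fun i =>
    if w₀ i = 0 ∧ b i = 0 then ((0 : Fin d → ℝ), (1 : ℝ))
    else (r i • w₀ i, r i * b i) with hp
  have hrpos : ∀ i, ¬(w₀ i = 0 ∧ b i = 0) → 0 < ‖w₀ i‖ + |b i| := by
    intro i hi
    rcases eq_or_lt_of_le (by positivity : (0:ℝ) ≤ ‖w₀ i‖ + |b i|) with h | h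
    · exfalso
      apply hi
      constructor
      · have : ‖w₀ i‖ = 0 := by
          have h1 : (0:ℝ) ≤ ‖w₀ i‖ := norm_nonneg _
          have h2 : (0:ℝ) ≤ |b i| := abs_nonneg _
          linarith
        exact norm_eq_zero.1 this
      · have : |b i| = 0 := by
          have h1 : (0:ℝ) ≤ ‖w₀ i‖ := norm_nonneg _
          have h2 : (0:ℝ) ≤ |b i| := abs_nonneg _
          linarith
        exact abs_eq_zero.1 this
    · exact h
  refine ⟨p, ?_, ?_⟩
  · intro i
    by_cases hi : w₀ i = 0 ∧ b i = 0
    · simp [hp, hi]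
    · have hpos := hrpos i hi
      simp only [hp, if_neg hi]
      rw [norm_smul, abs_mul, Real.norm_eq_abs, abs_of_pos (by positivity : 0 < r i)]
      rw [← mul_add, hr]
      exact inv_mul_cancel₀ (ne_of_gt hpos)
  · rw [hP]
    ext x
    simp only [sysSet, mem_setOf_eq]
    refine forall_congr' fun i => ?_
    by_cases hi : w₀ i = 0 ∧ b i = 0
    · simp only [hp, if_pos hi]
      have hu0 : u i x = 0 := by rw [hw₀ i, hi.1]; simp [dotL_apply]
      have h0 : dotL (0 : Fin d → ℝ) x = 0 := by simp [dotL_apply]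
      rw [hu0, hi.2, h0]
      norm_num
    · have hpos := hrpos i hi
      simp only [hp, if_neg hi]
      rw [dotL_smul, LinearMap.smul_apply, smul_eq_mul, ← hw₀ i]
      exact (mul_le_mul_iff_right₀ (by positivity : 0 < r i)).symm

lemma exists_maxFree (S' : Set (Fin d → ℝ)) {L : Set (Fin d → ℝ)} (hL : IsFreeSet S' L)
    (hfull : FullDim L) : ∃ M, IsMaxFree S' M ∧ L ⊆ M := by
  obtain ⟨z, hz⟩ : (interior L).Nonempty :=
    (hL.2.1.interior_nonempty_iff_affineSpan_eq_top).2 hfull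
  set C := {A : Set (Fin d → ℝ) | IsFreeSet S' A ∧ L ⊆ A} with hC
  have hzorn : ∃ M, L ⊆ M ∧ Maximal (· ∈ C) M := by
    refine zorn_subset_nonempty C ?_ L ⟨hL, subset_rfl⟩
    intro c hcC hchain hcne
    obtain ⟨A₀, hA₀⟩ := hcne
    set U := ⋃₀ c with hU
    have hUconv : Convex ℝ U := (hchain.directedOn).convex_sUnion (fun A hA => (hcC hA).1.2.1)
    have hLU : L ⊆ U := (hcC hA₀).2.trans (subset_sUnion_of_mem hA₀)
    have hzintU : z ∈ interior U := interior_mono hLU hz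
    have hopenseg : ∀ (x : Fin d → ℝ) (t : ℝ), 0 < t →
        x ∈ openSegment ℝ z (x + t • (x - z)) := by
      intro x t ht
      have h1t : (0:ℝ) < 1 + t := by linarith
      refine ⟨t/(1+t), 1/(1+t), by positivity, by positivity, by field_simp; ring, ?_⟩
      match_scalars
      · field_simp
        ring
      · field_simp
    have step2 : ∀ x ∈ interior U, ∃ A ∈ c, x ∈ interior A := by
      intro x hx
      obtain ⟨t, ht, hmem⟩ := exists_pos_ray isOpen_interior hx (x - z)
      obtain ⟨A, hAc, hyA⟩ := interior_subset hmem
      have hzA : z ∈ interior A := interior_mono ((hcC hAc).2) hz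
      have hconvA : Convex ℝ A := (hcC hAc).1.2.1
      exact ⟨A, hAc, hconvA.openSegment_interior_closure_subset_interior hzA
        (subset_closure hyA) (hopenseg x t ht)⟩
    have step1 : ∀ x ∈ interior (closure U), x ∈ interior U := by
      intro x hx
      obtain ⟨t, ht, hmem⟩ := exists_pos_ray isOpen_interior hx (x - z)
      exact hUconv.openSegment_interior_closure_subset_interior hzintU
        (interior_subset hmem) (hopenseg x t ht)
    refine ⟨closure U, ⟨⟨isClosed_closure, hUconv.closure, ?_⟩,
      hLU.trans subset_closure⟩, fun A hA => (subset_sUnion_of_mem hA).trans subset_closure⟩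
    rw [eq_empty_iff_forall_notMem]
    rintro x ⟨hx1, hx2⟩
    obtain ⟨A, hAc, hxA⟩ := step2 x (step1 x hx1)
    have h := (hcC hAc).1.2.2
    rw [eq_empty_iff_forall_notMem] at h
    exact h x ⟨hxA, hx2⟩
  obtain ⟨M, hLM, hmax⟩ := hzorn
  refine ⟨M, ⟨hmax.prop.1, ?_⟩, hLM⟩
  intro L' hL' hML'
  exact subset_antisymm (hmax.2 ⟨hL', hLM.trans hML'⟩ hML') hML'

end Aux7
theorem f_liminf {d : ℕ} (S : Set (Fin d → ℝ)) (St : ℕ → Set (Fin d → ℝ))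
    (hmono : ∀ t, St t ⊆ St (t + 1)) (hunion : S = ⋃ t, St t) (k : ℕ)
    (hinf : {t : ℕ | ∀ L, IsMaxFree (St t) L → FullDim L →
        IsPolyhedron L ∧ FacetsLE L k}.Infinite) :
    ∀ L, IsFreeSet S L → FullDim L →
      ∃ Q, IsPolyhedron Q ∧ IsFreeSet S Q ∧ FacetsLE Q k ∧ L ⊆ Q := by
  classical
  intro L hL hfull
  have hStS : ∀ t, St t ⊆ S := fun t => hunion ▸ subset_iUnion St t
  have hSmono : Monotone St := monotone_nat_of_le_succ hmono
  have hLfree : ∀ t, IsFreeSet (St t) L := by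
    intro t
    refine ⟨hL.1, hL.2.1, eq_empty_iff_forall_notMem.2 ?_⟩
    rintro x ⟨h1, h2⟩
    have h := hL.2.2
    rw [eq_empty_iff_forall_notMem] at h
    exact h x ⟨h1, hStS t h2⟩
  set pred : ℕ → Prop := fun t => ∀ L', IsMaxFree (St t) L' → FullDim L' →
    IsPolyhedron L' ∧ FacetsLE L' k with hpred
  have hinf' : (setOf pred).Infinite := hinf
  set τ : ℕ → ℕ := Nat.nth pred with hτ
  have hτmem : ∀ n, pred (τ n) := Nat.nth_mem_of_infinite hinf'
  have hτmono : StrictMono τ := Nat.nth_strictMono hinf'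
  have key : ∀ n : ℕ, ∃ p : Fin k → (Fin d → ℝ) × ℝ,
      (∀ i, ‖(p i).1‖ + |(p i).2| = 1) ∧ L ⊆ {x | ∀ i, dotL (p i).1 x ≤ (p i).2} ∧
      interior {x | ∀ i, dotL (p i).1 x ≤ (p i).2} ∩ St (τ n) = ∅ := by
    intro n
    obtain ⟨M, hM, hLM⟩ := exists_maxFree (St (τ n)) (hLfree (τ n)) hfull
    have hMfull : FullDim M := by
      have h1 := affineSpan_mono ℝ hLM
      rw [FullDim] at hfull ⊢
      rw [hfull] at h1
      exact top_unique h1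
    obtain ⟨hpoly, hfac⟩ := hτmem n M hM hMfull
    obtain ⟨m, u, b, hrep⟩ := hpoly
    obtain ⟨u', b', hrep2⟩ := reduce_rep hMfull hfac m u b hrep
    obtain ⟨p, hp1, hp2⟩ := norm_rep u' b' hrep2
    exact ⟨p, hp1, hp2 ▸ hLM, hp2 ▸ hM.1.2.2⟩
  choose g hg1 hg2 hg3 using key
  set X : Set (Fin k → (Fin d → ℝ) × ℝ) := {p | ∀ i, ‖(p i).1‖ + |(p i).2| = 1} with hX
  have hXcomp : IsCompact X := by
    apply Metric.isCompact_of_isClosed_isBounded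
    · have hXi : X = ⋂ i, {p : Fin k → (Fin d → ℝ) × ℝ | ‖(p i).1‖ + |(p i).2| = 1} := by
        ext p; simp [hX]
      rw [hXi]
      refine isClosed_iInter fun i => isClosed_eq ?_ continuous_const
      have h1 : Continuous fun p : Fin k → (Fin d → ℝ) × ℝ => (p i).1 :=
        continuous_fst.comp (continuous_apply i)
      have h2 : Continuous fun p : Fin k → (Fin d → ℝ) × ℝ => (p i).2 :=
        continuous_snd.comp (continuous_apply i)
      exact h1.norm.add h2.abs
    · rw [isBounded_iff_forall_norm_le]
      refine ⟨1, fun p hp => ?_⟩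
      rw [pi_norm_le_iff_of_nonneg zero_le_one]
      intro i
      have h1 : ‖(p i).1‖ ≤ 1 := by linarith [abs_nonneg (p i).2, hp i]
      have h2 : ‖(p i).2‖ ≤ 1 := by
        rw [Real.norm_eq_abs]; linarith [norm_nonneg (p i).1, hp i]
      calc ‖p i‖ = max ‖(p i).1‖ ‖(p i).2‖ := Prod.norm_def _
        _ ≤ 1 := max_le h1 h2
  obtain ⟨p, hpX, φ, hφ, hconv⟩ := hXcomp.tendsto_subseq hg1
  set Q : Set (Fin d → ℝ) := {x | ∀ i, dotL (p i).1 x ≤ (p i).2} with hQ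
  have hcw : ∀ (i : Fin k) (x : Fin d → ℝ),
      Filter.Tendsto (fun n => dotL ((g (φ n)) i).1 x) atTop (nhds (dotL (p i).1 x)) := by
    intro i x
    have hcont : Continuous fun q : Fin k → (Fin d → ℝ) × ℝ => dotL (q i).1 x :=
      (continuous_dotL_left x).comp (continuous_fst.comp (continuous_apply i))
    exact (hcont.continuousAt.tendsto).comp hconv
  have hcb : ∀ i : Fin k, Filter.Tendsto (fun n => ((g (φ n)) i).2) atTop (nhds ((p i).2)) := by
    intro i
    have hcont : Continuous fun q : Fin k → (Fin d → ℝ) × ℝ => (q i).2 :=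
      continuous_snd.comp (continuous_apply i)
    exact (hcont.continuousAt.tendsto).comp hconv
  have hLQ : L ⊆ Q := by
    intro x hx i
    exact le_of_tendsto_of_tendsto' (hcw i x) (hcb i) (fun n => hg2 (φ n) hx i)
  have hLne : L.Nonempty := fullDim_nonempty hfull
  have hQfull : FullDim Q := by
    have h1 := affineSpan_mono ℝ hLQ
    rw [FullDim] at hfull ⊢
    rw [hfull] at h1
    exact top_unique h1
  have hQsys : Q = sysSet (fun i => dotL (p i).1) (fun i => (p i).2) := rfl
  refine ⟨Q, ⟨k, fun i => dotL (p i).1, fun i => (p i).2, rfl⟩, ⟨?_, ?_, ?_⟩, ?_, hLQ⟩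
  · rw [hQsys]; exact sys_closed _ _
  · rw [hQsys]; exact sys_convex _ _
  · rw [eq_empty_iff_forall_notMem]
    rintro s ⟨hsint, hsS⟩
    rw [hunion] at hsS
    obtain ⟨t₀, ht₀⟩ := mem_iUnion.1 hsS
    have hstrict : ∀ i, dotL (p i).1 s < (p i).2 := by
      intro i
      by_cases hzero : dotL (p i).1 = (0 : (Fin d → ℝ) →ₗ[ℝ] ℝ)
      · have hw : (p i).1 = 0 := (dotL_eq_zero_iff _).1 hzero
        have habs : |(p i).2| = 1 := by
          have h := hpX i
          rw [hw] at h
          simpa using h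
        have hble : (0:ℝ) ≤ (p i).2 := by
          obtain ⟨x, hx⟩ := hLne
          have h := hLQ hx i
          rw [hzero] at h
          simpa using h
        rw [hzero]
        simp only [LinearMap.zero_apply]
        rw [abs_of_nonneg hble] at habs
        linarith
      · exact interior_subset_strict (hQsys ▸ hsint) i hzero
    have hev : ∀ᶠ n in atTop, ∀ i, dotL ((g (φ n)) i).1 s < ((g (φ n)) i).2 :=
      Filter.eventually_all.2 fun i => (hcw i s).eventually_lt (hcb i) (hstrict i)
    obtain ⟨n, hn1, hn2⟩ := ((eventually_ge_atTop t₀).and hev).exists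
    have hb0g : ∀ i, (fun i => dotL ((g (φ n)) i).1) i = 0 → 0 ≤ ((g (φ n)) i).2 := by
      intro i hz
      obtain ⟨x, hx⟩ := hLne
      have h := hg2 (φ n) hx i
      simp only at hz
      rw [hz] at h
      simpa using h
    have hsint' : s ∈ interior (sysSet (fun i => dotL ((g (φ n)) i).1)
        (fun i => ((g (φ n)) i).2)) :=
      strict_subset_interior hb0g (fun i _ => hn2 i)
    have hle : t₀ ≤ τ (φ n) := le_trans hn1 (le_trans hφ.le_apply hτmono.le_apply)
    have hsSt : s ∈ St (τ (φ n)) := hSmono hle ht₀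
    have h := hg3 (φ n)
    rw [eq_empty_iff_forall_notMem] at h
    exact h s ⟨hsint', hsSt⟩
  · have hfull' : FullDim (sysSet (fun i => dotL (p i).1) (fun i => (p i).2)) := by
      rw [← hQsys]; exact hQfull
    have h := facets_le_sys (fun i => dotL (p i).1) (fun i => (p i).2) hfull'
    rw [hQsys]
    exact h
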